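/- arXiv:2401.10294 — 3 statements merged into one kernel-verified Lean document; each statement's English description precedes it below -/
import Mathlib

section
/- If L is the privacy loss random variable of distributions P, Q (i.e., L = ln(P(x)/Q(x)) where x ~ P), then for all α ≥ 0, H_α(P,Q) = E_L[max{1 − α e^{−L}, 0}]. -/
open MeasureTheory Real

theorem hockey_stick_via_privacy_loss {X : Type*} [MeasurableSpace X] (μ : Measure X)
    (P Q : X → ℝ) (hP : ∀ x, 0 < P x) (hQ : ∀ x, 0 < Q x)
    (hP1 : ∫ x, P x ∂μ = 1) (hQ1 : ∫ x, Q x ∂μ = 1)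
    (α : ℝ) (hα : 0 ≤ α) :
    ∫ x, max (P x - α * Q x) 0 ∂μ
      = ∫ x, P x * max (1 - α * exp (-(log (P x / Q x)))) 0 ∂μ := by
  refine integral_congr_ae (Filter.Eventually.of_forall fun x => ?_)
  dsimp only
  have hpq : 0 < P x / Q x := div_pos (hP x) (hQ x)
  rw [exp_neg, exp_log hpq, mul_max_of_nonneg _ _ (hP x).le]
  rw [mul_zero]
  congr 1
  field_simp [(hP x).ne']
end

section
/- If L_1 is the privacy loss random variable of (P_1, Q_1) and L_2 is the privacy loss random variable of (P_2, Q_2), with independence, then L_1 + L_2 (i.e., the convolution of their distributions) is the privacy loss random variable of the product distributions (P_1 × P_2, Q_1 × Q_2). -/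
open MeasureTheory Real

/-!
The log-likelihood ratio of a product splits as `L₁ x + L₂ y`. Under `P₁ × P₂` the pair
`(L₁ x, L₂ y)` has law `P₁.map L₁ × P₂.map L₂`, and the pushforward of that product under
addition is the convolution.
-/

lemma log_mul_div_mul_eq_add {a b c d : ℝ} (hac : a / c ≠ 0) (hbd : b / d ≠ 0) :
    log (a * b / (c * d)) = log (a / c) + log (b / d) := by
  rw [← div_mul_div_comm, log_mul hac hbd]

lemma MeasureTheory.Measure.map_add_prod_eq_map_conv_map {α β M : Type*} [MeasurableSpace α]
    [MeasurableSpace β] [AddMonoid M] [MeasurableSpace M] [MeasurableAdd₂ M]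
    {μ : Measure α} {ν : Measure β} [SFinite μ] [SFinite ν] {f : α → M} {g : β → M}
    (hf : Measurable f) (hg : Measurable g) :
    (μ.prod ν).map (fun z => f z.1 + g z.2) = μ.map f ∗ ν.map g := by
  rw [conv, map_prod_map μ ν hf hg, map_map measurable_add (hf.prodMap hg)]
  rfl

theorem privacy_loss_of_product_general {X₁ X₂ : Type*} [MeasurableSpace X₁] [MeasurableSpace X₂]
    (P₁ : Measure X₁) (P₂ : Measure X₂)
    [IsProbabilityMeasure P₁] [IsProbabilityMeasure P₂]
    (p₁ q₁ : X₁ → ℝ) (p₂ q₂ : X₂ → ℝ)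
    (hp₁ : ∀ x, 0 < p₁ x) (hq₁ : ∀ x, 0 < q₁ x) (hp₂ : ∀ x, 0 < p₂ x) (hq₂ : ∀ x, 0 < q₂ x)
    (L₁ : X₁ → ℝ) (L₂ : X₂ → ℝ)
    (hL₁ : L₁ = fun x => log (p₁ x / q₁ x)) (hL₂ : L₂ = fun x => log (p₂ x / q₂ x))
    (hmL₁ : Measurable L₁) (hmL₂ : Measurable L₂) :
    -- the privacy loss of the product pair is `(x, y) ↦ L₁ x + L₂ y`, and its
    -- distribution under `P₁ × P₂` is the convolution of the laws of `L₁` and `L₂`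
    ((fun z : X₁ × X₂ => log ((p₁ z.1 * p₂ z.2) / (q₁ z.1 * q₂ z.2)))
        = fun z : X₁ × X₂ => L₁ z.1 + L₂ z.2) ∧
      Measure.map (fun z : X₁ × X₂ => L₁ z.1 + L₂ z.2) (P₁.prod P₂)
        = Measure.map (fun p : ℝ × ℝ => p.1 + p.2)
            ((P₁.map L₁).prod (P₂.map L₂)) := by
  refine ⟨?_, Measure.map_add_prod_eq_map_conv_map hmL₁ hmL₂⟩
  funext z
  rw [hL₁, hL₂]
  exact log_mul_div_mul_eq_add (div_pos (hp₁ z.1) (hq₁ z.1)).ne'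
    (div_pos (hp₂ z.2) (hq₂ z.2)).ne'

theorem privacy_loss_of_product {X₁ X₂ : Type*} [MeasurableSpace X₁] [MeasurableSpace X₂]
    (P₁ Q₁ : Measure X₁) (P₂ Q₂ : Measure X₂)
    [IsProbabilityMeasure P₁] [IsProbabilityMeasure P₂]
    (p₁ q₁ : X₁ → ℝ) (p₂ q₂ : X₂ → ℝ)
    (hp₁ : ∀ x, 0 < p₁ x) (hq₁ : ∀ x, 0 < q₁ x) (hp₂ : ∀ x, 0 < p₂ x) (hq₂ : ∀ x, 0 < q₂ x)
    (hP₁ : P₁ = Q₁.withDensity fun x => ENNReal.ofReal (p₁ x / q₁ x))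
    (hP₂ : P₂ = Q₂.withDensity fun x => ENNReal.ofReal (p₂ x / q₂ x))
    (L₁ : X₁ → ℝ) (L₂ : X₂ → ℝ)
    (hL₁ : L₁ = fun x => log (p₁ x / q₁ x)) (hL₂ : L₂ = fun x => log (p₂ x / q₂ x))
    (hmL₁ : Measurable L₁) (hmL₂ : Measurable L₂) :
    -- the privacy loss of the product pair is `(x, y) ↦ L₁ x + L₂ y`, and its
    -- distribution under `P₁ × P₂` is the convolution of the laws of `L₁` and `L₂`
    ((fun z : X₁ × X₂ => log ((p₁ z.1 * p₂ z.2) / (q₁ z.1 * q₂ z.2)))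
        = fun z : X₁ × X₂ => L₁ z.1 + L₂ z.2) ∧
      Measure.map (fun z : X₁ × X₂ => L₁ z.1 + L₂ z.2) (P₁.prod P₂)
        = Measure.map (fun p : ℝ × ℝ => p.1 + p.2)
            ((P₁.map L₁).prod (P₂.map L₂)) :=
  privacy_loss_of_product_general P₁ P₂ p₁ q₁ p₂ q₂ hp₁ hq₁ hp₂ hq₂ L₁ L₂ hL₁ hL₂ hmL₁ hmL₂
end

section
/- If (P_1,Q_1) dominates (P_1',Q_1') and (P_2,Q_2) dominates (P_2',Q_2') in hockey-stick divergence for all α ≥ 0, and all four pairs consist of product-measurable densities, then the product pair (P_1×P_2, Q_1×Q_2) dominates (P_1'×P_2', Q_1'×Q_2'): H_α(P_1'×P_2', Q_1'×Q_2') ≤ H_α(P_1×P_2, Q_1×Q_2) for all α ≥ 0 (non-adaptive composition of dominating pairs). -/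
open MeasureTheory

private lemma max_integrable {X Y : Type*} [MeasurableSpace X] [MeasurableSpace Y]
    (μ : Measure X) (ν : Measure Y) [SigmaFinite μ] [SigmaFinite ν]
    (P Q : X → ℝ) (R S : Y → ℝ)
    (hPnn : ∀ x, 0 ≤ P x) (hRnn : ∀ y, 0 ≤ R y)
    (hQnn : ∀ x, 0 ≤ Q x) (hSnn : ∀ y, 0 ≤ S y)
    (hPm : Measurable P) (hQm : Measurable Q) (hRm : Measurable R) (hSm : Measurable S)
    (hPi : Integrable P μ) (hRi : Integrable R ν)
    (α : ℝ) (hα : 0 ≤ α) :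
    Integrable (fun z : X × Y => max (P z.1 * R z.2 - α * (Q z.1 * S z.2)) 0) (μ.prod ν) := by
  have hmeas : Measurable (fun z : X × Y => max (P z.1 * R z.2 - α * (Q z.1 * S z.2)) 0) := by
    apply Measurable.max _ measurable_const
    exact ((hPm.comp measurable_fst).mul (hRm.comp measurable_snd)).sub
      (((hQm.comp measurable_fst).mul (hSm.comp measurable_snd)).const_mul α)
  refine (hPi.mul_prod hRi).mono hmeas.aestronglyMeasurable ?_
  filter_upwards with z
  have h0 : (0:ℝ) ≤ P z.1 * R z.2 := mul_nonneg (hPnn z.1) (hRnn z.2)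
  have h1 : (0:ℝ) ≤ α * (Q z.1 * S z.2) :=
    mul_nonneg hα (mul_nonneg (hQnn z.1) (hSnn z.2))
  rw [Real.norm_eq_abs, Real.norm_eq_abs, abs_of_nonneg (le_max_right _ _), abs_of_nonneg h0]
  exact max_le (by linarith) h0

private lemma step {X Y : Type*} [MeasurableSpace X] [MeasurableSpace Y]
    (μ : Measure X) (ν : Measure Y) [SigmaFinite μ] [SigmaFinite ν]
    (P Q P' Q' : X → ℝ) (R S : Y → ℝ)
    (hPnn : ∀ x, 0 ≤ P x) (hQnn : ∀ x, 0 ≤ Q x)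
    (hP'nn : ∀ x, 0 ≤ P' x) (hQ'nn : ∀ x, 0 ≤ Q' x)
    (hRnn : ∀ y, 0 ≤ R y) (hSnn : ∀ y, 0 ≤ S y)
    (hPm : Measurable P) (hQm : Measurable Q) (hP'm : Measurable P') (hQ'm : Measurable Q')
    (hRm : Measurable R) (hSm : Measurable S)
    (hPi : Integrable P μ) (hP'i : Integrable P' μ) (hRi : Integrable R ν)
    (hdom : ∀ β : ℝ, 0 ≤ β →
        ∫ x, max (P' x - β * Q' x) 0 ∂μ ≤ ∫ x, max (P x - β * Q x) 0 ∂μ)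
    (α : ℝ) (hα : 0 ≤ α) :
    ∫ z, max (P' z.1 * R z.2 - α * (Q' z.1 * S z.2)) 0 ∂(μ.prod ν)
      ≤ ∫ z, max (P z.1 * R z.2 - α * (Q z.1 * S z.2)) 0 ∂(μ.prod ν) := by
  have hI := max_integrable μ ν P Q R S hPnn hRnn hQnn hSnn hPm hQm hRm hSm hPi hRi α hα
  have hI' := max_integrable μ ν P' Q' R S hP'nn hRnn hQ'nn hSnn hP'm hQ'm hRm hSm hP'i hRi α hα
  rw [integral_prod_symm _ hI, integral_prod_symm _ hI']
  refine integral_mono hI'.integral_prod_right hI.integral_prod_right fun y => ?_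
  by_cases hR : R y = 0
  · have e1 : ∀ (Pf Qf : X → ℝ), (∀ x, 0 ≤ Qf x) →
        ∫ x, max (Pf x * R y - α * (Qf x * S y)) 0 ∂μ = 0 := by
      intro Pf Qf hQf
      have hz : (fun x => max (Pf x * R y - α * (Qf x * S y)) 0) = fun _ => (0:ℝ) := by
        funext x
        rw [hR, mul_zero, zero_sub,
          max_eq_right (neg_nonpos.mpr (mul_nonneg hα (mul_nonneg (hQf x) (hSnn y))))]
      rw [hz, integral_zero]
    rw [e1 P Q hQnn, e1 P' Q' hQ'nn]
  · have hRpos : 0 < R y := lt_of_le_of_ne (hRnn y) (Ne.symm hR)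
    set β := α * S y / R y with hβ
    have hβnn : 0 ≤ β := div_nonneg (mul_nonneg hα (hSnn y)) (hRnn y)
    have e2 : ∀ (Pf Qf : X → ℝ),
        ∫ x, max (Pf x * R y - α * (Qf x * S y)) 0 ∂μ
          = R y * ∫ x, max (Pf x - β * Qf x) 0 ∂μ := by
      intro Pf Qf
      rw [← integral_const_mul]
      apply integral_congr_ae
      filter_upwards with x
      have key : R y * (Pf x - β * Qf x) = Pf x * R y - α * (Qf x * S y) := by
        rw [hβ]; field_simp
      rw [mul_max_of_nonneg _ _ (hRnn y), mul_zero, key]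
    rw [e2 P Q, e2 P' Q']
    exact mul_le_mul_of_nonneg_left (hdom β hβnn) (hRnn y)

theorem dominating_pairs_product {X Y : Type*} [MeasurableSpace X] [MeasurableSpace Y]
    (μ : Measure X) (ν : Measure Y) [SigmaFinite μ] [SigmaFinite ν]
    (P₁ Q₁ P₁' Q₁' : X → ℝ) (P₂ Q₂ P₂' Q₂' : Y → ℝ)
    (hnn : (∀ x, 0 ≤ P₁ x ∧ 0 ≤ Q₁ x ∧ 0 ≤ P₁' x ∧ 0 ≤ Q₁' x) ∧
           (∀ y, 0 ≤ P₂ y ∧ 0 ≤ Q₂ y ∧ 0 ≤ P₂' y ∧ 0 ≤ Q₂' y))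
    (hmeas : Measurable P₁ ∧ Measurable Q₁ ∧ Measurable P₁' ∧ Measurable Q₁' ∧
             Measurable P₂ ∧ Measurable Q₂ ∧ Measurable P₂' ∧ Measurable Q₂')
    (hint : Integrable P₁ μ ∧ Integrable Q₁ μ ∧ Integrable P₁' μ ∧ Integrable Q₁' μ ∧
            Integrable P₂ ν ∧ Integrable Q₂ ν ∧ Integrable P₂' ν ∧ Integrable Q₂' ν)
    (hone : (∫ x, P₁ x ∂μ = 1) ∧ (∫ x, Q₁ x ∂μ = 1) ∧ (∫ x, P₁' x ∂μ = 1) ∧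
            (∫ x, Q₁' x ∂μ = 1) ∧ (∫ y, P₂ y ∂ν = 1) ∧ (∫ y, Q₂ y ∂ν = 1) ∧
            (∫ y, P₂' y ∂ν = 1) ∧ (∫ y, Q₂' y ∂ν = 1))
    (hdom₁ : ∀ α : ℝ, 0 ≤ α →
        ∫ x, max (P₁' x - α * Q₁' x) 0 ∂μ ≤ ∫ x, max (P₁ x - α * Q₁ x) 0 ∂μ)
    (hdom₂ : ∀ α : ℝ, 0 ≤ α →
        ∫ y, max (P₂' y - α * Q₂' y) 0 ∂ν ≤ ∫ y, max (P₂ y - α * Q₂ y) 0 ∂ν) :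
    ∀ α : ℝ, 0 ≤ α →
      ∫ z, max (P₁' z.1 * P₂' z.2 - α * (Q₁' z.1 * Q₂' z.2)) 0 ∂(μ.prod ν)
        ≤ ∫ z, max (P₁ z.1 * P₂ z.2 - α * (Q₁ z.1 * Q₂ z.2)) 0 ∂(μ.prod ν) := by
  obtain ⟨hnn₁, hnn₂⟩ := hnn
  obtain ⟨hP₁m, hQ₁m, hP₁'m, hQ₁'m, hP₂m, hQ₂m, hP₂'m, hQ₂'m⟩ := hmeas
  obtain ⟨hP₁i, hQ₁i, hP₁'i, hQ₁'i, hP₂i, hQ₂i, hP₂'i, hQ₂'i⟩ := hint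
  intro α hα
  -- middle hybrid: (P₁' × P₂, Q₁' × Q₂)
  have h1 : ∫ z, max (P₁' z.1 * P₂ z.2 - α * (Q₁' z.1 * Q₂ z.2)) 0 ∂(μ.prod ν)
      ≤ ∫ z, max (P₁ z.1 * P₂ z.2 - α * (Q₁ z.1 * Q₂ z.2)) 0 ∂(μ.prod ν) :=
    step μ ν P₁ Q₁ P₁' Q₁' P₂ Q₂
      (fun x => (hnn₁ x).1) (fun x => (hnn₁ x).2.1) (fun x => (hnn₁ x).2.2.1)
      (fun x => (hnn₁ x).2.2.2) (fun y => (hnn₂ y).1) (fun y => (hnn₂ y).2.1)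
      hP₁m hQ₁m hP₁'m hQ₁'m hP₂m hQ₂m hP₁i hP₁'i hP₂i hdom₁ α hα
  have h2 : ∫ z, max (P₂' z.1 * P₁' z.2 - α * (Q₂' z.1 * Q₁' z.2)) 0 ∂(ν.prod μ)
      ≤ ∫ z, max (P₂ z.1 * P₁' z.2 - α * (Q₂ z.1 * Q₁' z.2)) 0 ∂(ν.prod μ) :=
    step ν μ P₂ Q₂ P₂' Q₂' P₁' Q₁'
      (fun y => (hnn₂ y).1) (fun y => (hnn₂ y).2.1) (fun y => (hnn₂ y).2.2.1)
      (fun y => (hnn₂ y).2.2.2) (fun x => (hnn₁ x).2.2.1) (fun x => (hnn₁ x).2.2.2)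
      hP₂m hQ₂m hP₂'m hQ₂'m hP₁'m hQ₁'m hP₂i hP₂'i hP₁'i hdom₂ α hα
  have hswap : ∀ (A : Y → ℝ) (B : X → ℝ) (C : Y → ℝ) (D : X → ℝ),
      ∫ z, max (A z.1 * B z.2 - α * (C z.1 * D z.2)) 0 ∂(ν.prod μ)
        = ∫ z : X × Y, max (B z.1 * A z.2 - α * (D z.1 * C z.2)) 0 ∂(μ.prod ν) := by
    intro A B C D
    rw [← integral_prod_swap (fun z : Y × X => max (A z.1 * B z.2 - α * (C z.1 * D z.2)) 0)]
    apply integral_congr_ae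
    filter_upwards with z
    simp [Prod.swap]
    ring_nf
  rw [hswap P₂' P₁' Q₂' Q₁', hswap P₂ P₁' Q₂ Q₁'] at h2
  calc ∫ z, max (P₁' z.1 * P₂' z.2 - α * (Q₁' z.1 * Q₂' z.2)) 0 ∂(μ.prod ν)
      ≤ ∫ z, max (P₁' z.1 * P₂ z.2 - α * (Q₁' z.1 * Q₂ z.2)) 0 ∂(μ.prod ν) := h2
    _ ≤ _ := h1
end
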